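/- A sequence of nonnegative integers s = (s_i : i ≥ 0) with finite support is the empirical children distribution of some finite plane tree if and only if s_0 ≥ 1 and Σ_{i≥0} s_i = 1 + Σ_{i≥0} i·s_i < ∞. -/

import Mathlib

open scoped BigOperators Classical
open Filter MeasureTheory

namespace Paper

inductive PlaneTree : Type
  | node : List PlaneTree → PlaneTree

namespace PlaneTree

def deg : PlaneTree → ℕ
  | node ts => ts.length

mutual
  def pos : PlaneTree → List (List ℕ)
    | node ts => [] :: posF 0 ts
  def posF : ℕ → List PlaneTree → List (List ℕ)
    | _, [] => []
    | i, t :: ts => (pos t).map (fun q => i :: q) ++ posF (i + 1) ts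
end

mutual
  def dfsDeg : PlaneTree → List ℕ
    | node ts => ts.length :: dfsDegF ts
  def dfsDegF : List PlaneTree → List ℕ
    | [] => []
    | t :: ts => dfsDeg t ++ dfsDegF ts
end

def subtreeAt : PlaneTree → List ℕ → Option PlaneTree
  | t, [] => some t
  | node ts, i :: p =>
    match ts[i]? with
    | some t' => subtreeAt t' p
    | none => none

def numChild (t : PlaneTree) (p : List ℕ) : ℕ := ((subtreeAt t p).map deg).getD 0

def IsVertex (t : PlaneTree) (p : List ℕ) : Prop := (subtreeAt t p).isSome

def IsLeaf (t : PlaneTree) (p : List ℕ) : Prop := (subtreeAt t p).isSome ∧ numChild t p = 0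

/-- number of vertices of `t` having exactly `i` children (empirical children distribution) -/
def ecd (t : PlaneTree) (i : ℕ) : ℕ :=
  ((pos t).filter fun p => decide (numChild t p = i)).length

/-- ECD of a plane forest with ranked roots -/
def ecdF (f : List PlaneTree) (i : ℕ) : ℕ := (f.map fun t => ecd t i).sum

/-- number of children of the `j`-th root of a forest -/
def rootDeg (f : List PlaneTree) (j : ℕ) : ℕ := deg (f.getD j (node []))

/-- the set of plane forests with ranked roots with ECD `s` -/
def forestSet (s : ℕ → ℕ) : Set (List PlaneTree) := {f | ∀ i, ecdF f i = s i}

/-- the set of plane trees with ECD `s` -/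
def treeSet (s : ℕ → ℕ) : Set PlaneTree := {t | ∀ i, ecd t i = s i}

/-- strict depth-first (preorder) order on positions -/
def dfLT (p q : List ℕ) : Prop := List.Lex (· < ·) p q

def parent (p : List ℕ) : List ℕ := p.dropLast

/-- `q` is a strict ancestor of `p`, i.e. `q ∈ [ρ, p)` -/
def StrictAnc (q p : List ℕ) : Prop := q <+: p ∧ q ≠ p

/-- admissible (ordered) pair of leaves -/
def Admissible (t : PlaneTree) (u v : List ℕ) : Prop :=
  IsLeaf t u ∧ IsLeaf t v ∧ 2 ≤ v.length ∧
    StrictAnc (parent (parent v)) (parent u) ∧ dfLT (parent u) (parent v)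

def ASet (t : PlaneTree) : Set (List ℕ × List ℕ) := {uv | Admissible t uv.1 uv.2}

def fA (t : PlaneTree) (u : List ℕ) : Set (List ℕ) := {v | Admissible t u v}

def B2 (t : PlaneTree) (u : List ℕ) : Set (List ℕ) :=
  {v | IsVertex t v ∧ 2 ≤ v.length ∧ StrictAnc (parent (parent v)) u}

noncomputable def leafFinset (t : PlaneTree) : Finset (List ℕ) :=
  ((pos t).toFinset).filter fun p => IsLeaf t p

def leafOf {k : ℕ} (w : Fin k → List ℕ × List ℕ) (y : Fin k × Bool) : List ℕ :=
  if y.2 then (w y.1).1 else (w y.1).2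

/-- ordered `k`-tuples of admissible pairs using `2k` distinct leaves -/
def AkOrd (t : PlaneTree) (k : ℕ) : Set (Fin k → List ℕ × List ℕ) :=
  {w | (∀ a, Admissible t (w a).1 (w a).2) ∧ Function.Injective (leafOf w)}

/-- unordered collections of `k` admissible pairs using `2k` distinct leaves -/
def Ak (t : PlaneTree) (k : ℕ) : Set (Finset (List ℕ × List ℕ)) :=
  {x | x.card = k ∧ (∀ uv ∈ x, Admissible t uv.1 uv.2) ∧
    Set.InjOn (fun y : (List ℕ × List ℕ) × Bool => if y.2 then y.1.1 else y.1.2)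
      {y | y.1 ∈ x}}

/-- the set `T_s^(k)` of pairs of a plane tree with ECD `s` and a set of `k` admissible pairs -/
def Tsk (s : ℕ → ℕ) (k : ℕ) : Set (PlaneTree × Finset (List ℕ × List ℕ)) :=
  {tx | (∀ i, ecd tx.1 i = s i) ∧ tx.2 ∈ Ak tx.1 k}

end PlaneTree

/-- labeled plane trees -/
inductive LTree : Type
  | node : ℕ → List LTree → LTree

namespace LTree

mutual
  def shape : LTree → PlaneTree
    | node _ ts => .node (shapeF ts)
  def shapeF : List LTree → List PlaneTree
    | [] => []
    | t :: ts => shape t :: shapeF ts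
end

mutual
  def dfsLab : LTree → List ℕ
    | node a ts => a :: dfsLabF ts
  def dfsLabF : List LTree → List ℕ
    | [] => []
    | t :: ts => dfsLab t ++ dfsLabF ts
end

mutual
  def dfsDeg : LTree → List ℕ
    | node _ ts => ts.length :: dfsDegF ts
  def dfsDegF : List LTree → List ℕ
    | [] => []
    | t :: ts => dfsDeg t ++ dfsDegF ts
end

def subtreeAt : LTree → List ℕ → Option LTree
  | t, [] => some t
  | node _ ts, i :: p =>
    match ts[i]? with
    | some t' => subtreeAt t' p
    | none => none

def labelAt (t : LTree) (p : List ℕ) : ℕ :=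
  ((subtreeAt t p).map fun u => match u with | node a _ => a).getD 0

end LTree

/-- partial-sum steps of the permuted walk -/
def steps {m : ℕ} (c : Fin m → ℕ) (π : Equiv.Perm (Fin m)) : List ℤ :=
  List.ofFn fun i => (c (π i) : ℤ) - 1

/-- first index `j ∈ [1, length]` at which the partial sums attain their minimum -/
noncomputable def firstMinIdx (l : List ℤ) : ℕ :=
  (((Finset.Icc 1 l.length).filter fun j =>
      ∀ j' ∈ Finset.Icc 1 l.length, (l.take j).sum ≤ (l.take j').sum).min).untopD 0

/-- the DFS vertex sequence obtained by rotating the uniformly permuted vertex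
sequence at the first minimum of its Łukasiewicz-type walk (Vervaat transform) -/
noncomputable def rotSeq {m : ℕ} (c : Fin m → ℕ) (π : Equiv.Perm (Fin m)) : List (Fin m) :=
  (List.ofFn fun i => π i).rotate (firstMinIdx (steps c π))

/-- the degree of a vertex in a (simple) edge set -/
def degIn (E : Finset (Sym2 ℕ)) (v : ℕ) : ℕ := (E.filter fun e => v ∈ e).card

/-- degree of a vertex in a multigraph given by an edge multiset (loops count twice) -/
def mdeg (E : Multiset (Sym2 ℕ)) (v : ℕ) : ℕ :=
  (E.map fun e => (if v ∈ e then 1 else 0) + (if e = s(v, v) then 1 else 0)).sum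

/-- connectivity of a (multi)graph on vertex set `V` with edges `E` -/
def ConnOn (V : Finset ℕ) (E : Set (Sym2 ℕ)) : Prop :=
  ∀ a ∈ V, ∀ b ∈ V, Relation.ReflTransGen (fun a b => s(a, b) ∈ E) a b

/-- the set of simple connected labeled graphs on `{1, …, m}` with degree sequence `d` -/
def GconSet (m : ℕ) (d : ℕ → ℕ) : Set (Finset (Sym2 ℕ)) :=
  {E | (∀ e ∈ E, ¬ e.IsDiag) ∧ (∀ e ∈ E, ∀ v ∈ e, v ∈ Finset.Icc 1 m) ∧
       (∀ v ∈ Finset.Icc 1 m, degIn E v = d v) ∧ ConnOn (Finset.Icc 1 m) (E : Set (Sym2 ℕ))}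

/-- ECD of the children sequence `(d̃₂ − 1, …, d̃_{m̃} − 1, 0, …, 0)` (with `2k` zeros) -/
def ecdFromDeg (m k : ℕ) (d : ℕ → ℕ) (i : ℕ) : ℕ :=
  ((Finset.Icc 2 m).filter fun j => d j = i + 1).card + if i = 0 then 2 * k else 0

/-- `≪` order on admissible pairs -/
def pairLT (a b : List ℕ × List ℕ) : Prop :=
  PlaneTree.dfLT (PlaneTree.parent a.1) (PlaneTree.parent b.1) ∨
    (PlaneTree.parent a.1 = PlaneTree.parent b.1 ∧
      PlaneTree.dfLT (PlaneTree.parent a.2) (PlaneTree.parent b.2))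

/-- labeled elements of `T_s^(k)` as in the sampling algorithm: a labeled plane tree whose
labels are `{2, …, m̃ + 2k}`, in which the vertex labeled `j ≤ m̃` has `d̃_j − 1` children and
the vertices labeled `> m̃` are leaves, together with a `≪`-increasing tuple of `k` admissible
pairs of leaves with distinct leaves, the `j`-th pair carrying labels `(m̃+2j−1, m̃+2j)`. -/
def IsLabeledElement (m k : ℕ) (d : ℕ → ℕ) (t : LTree)
    (x : Fin k → List ℕ × List ℕ) : Prop :=
  (LTree.dfsLab t).Perm (List.range' 2 (m - 1 + 2 * k)) ∧
  (∀ p ∈ PlaneTree.pos (LTree.shape t),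
    PlaneTree.numChild (LTree.shape t) p =
      (if 2 ≤ LTree.labelAt t p ∧ LTree.labelAt t p ≤ m then d (LTree.labelAt t p) - 1 else 0)) ∧
  (∀ j, PlaneTree.Admissible (LTree.shape t) (x j).1 (x j).2) ∧
  Function.Injective (PlaneTree.leafOf x) ∧
  (∀ j j' : Fin k, j < j' → pairLT (x j) (x j')) ∧
  (∀ j : Fin k, LTree.labelAt t (x j).1 = m + 2 * (j : ℕ) + 1 ∧
      LTree.labelAt t (x j).2 = m + 2 * (j : ℕ) + 2)

/-- the edge multiset of the graph `I(t, x)`: tree edges, with the leaves of the admissible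
pairs deleted and an edge joining the two parents of each admissible pair added -/
noncomputable def Iedges (t : LTree) {k : ℕ} (x : Fin k → List ℕ × List ℕ) :
    Multiset (Sym2 ℕ) :=
  (↑(((PlaneTree.pos (LTree.shape t)).filter fun p =>
        decide (p ≠ ([] : List ℕ) ∧ ∀ j, p ≠ (x j).1 ∧ p ≠ (x j).2)).map
      fun p => s(LTree.labelAt t (PlaneTree.parent p), LTree.labelAt t p)) : Multiset (Sym2 ℕ))
  + ↑(List.ofFn fun j =>
      s(LTree.labelAt t (PlaneTree.parent (x j).1), LTree.labelAt t (PlaneTree.parent (x j).2)))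

/- Brownian excursion: Gaussian/Bessel kernels and finite-dimensional densities -/
noncomputable def gaussD (s x : ℝ) : ℝ := Real.exp (-(x ^ 2) / (2 * s)) / Real.sqrt (2 * Real.pi * s)

noncomputable def killedK (s x y : ℝ) : ℝ := gaussD s (y - x) - gaussD s (y + x)

noncomputable def bes3K (s x y : ℝ) : ℝ := (y / x) * killedK s x y

noncomputable def exStart (t x : ℝ) : ℝ :=
  Real.sqrt (2 / Real.pi) * x ^ 2 * t ^ (-(3 : ℝ) / 2) * Real.exp (-(x ^ 2) / (2 * t))

noncomputable def exEnd (s x : ℝ) : ℝ := (2 / s) * gaussD s x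

/-- finite-dimensional density of the standard Brownian excursion at times `t 0 < … < t n` -/
noncomputable def exFdd {n : ℕ} (t : Fin (n + 1) → ℝ) (x : Fin (n + 1) → ℝ) : ℝ :=
  if ∀ i, 0 < x i then
    Real.sqrt (Real.pi / 2) * exStart (t 0) (x 0) *
      (∏ i : Fin n, bes3K (t i.succ - t i.castSucc) (x i.castSucc) (x i.succ)) *
      exEnd (1 - t (Fin.last n)) (x (Fin.last n))
  else 0

/-- `e` is a standard Brownian excursion on `[0,1]`: continuous nonnegative paths vanishing at
the endpoints, positive inside, with the excursion finite-dimensional densities. -/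
def IsStdBrownianExcursion {Ω : Type*} [MeasureSpace Ω] (e : Ω → ℝ → ℝ) : Prop :=
  (∀ ω, Continuous (e ω)) ∧ (∀ ω, e ω 0 = 0) ∧ (∀ ω, e ω 1 = 0) ∧
  (∀ ω, ∀ x ∈ Set.Ioo (0 : ℝ) 1, 0 < e ω x) ∧
  (∀ t : ℝ, Measurable fun ω => e ω t) ∧
  ∀ (n : ℕ) (t : Fin (n + 1) → ℝ), StrictMono t → 0 < t 0 → t (Fin.last n) < 1 →
    Measure.map (fun ω i => e ω (t i)) (volume : Measure Ω)
      = volume.withDensity fun x => ENNReal.ofReal (exFdd t x)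

/-- `j`-th smallest value (0-based) among `ω 0, …, ω (m−1)` -/
noncomputable def orderStat {m : ℕ} (ω : Fin m → ℝ) (j : ℕ) : ℝ :=
  ((Multiset.map ω Finset.univ.val).sort (· ≤ ·)).getD j 0

end Paper

/-! The ECD of a tree `t` is the multiset of entries of its preorder degree sequence `dfsDeg t`,
and a tree has one more vertex than edges, which is the balance condition. The balance condition
forces a leaf, since a multiset of positive integers has at most as many elements as its sum.
Conversely, a multiset with one more element than its sum is realised by a caterpillar: its
positive entries are the degrees along a path, each vertex of which carries its remaining
children as leaves, and the balance condition says that these leaves are exactly its zeros. -/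

namespace Multiset

theorem finsum_count {α : Type*} [DecidableEq α] (m : Multiset α) :
    ∑ᶠ a, m.count a = card m := by
  rw [finsum_eq_sum_of_support_subset _ (s := m.toFinset) fun a ha => by simpa using ha,
    toFinset_sum_count_eq]

theorem finsum_mul_count (m : Multiset ℕ) : ∑ᶠ i, i * m.count i = m.sum := by
  rw [finsum_eq_sum_of_support_subset _ (s := m.toFinset) fun a ha => by simp_all,
    Finset.sum_multiset_count]
  exact Finset.sum_congr rfl fun i _ => by rw [smul_eq_mul, mul_comm]

theorem card_le_sum_of_ne_zero {m : Multiset ℕ} (hm : ∀ d ∈ m, d ≠ 0) :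
    card m ≤ m.sum := by
  simpa using card_nsmul_le_sum (a := 1) fun d hd => Nat.one_le_iff_ne_zero.mpr (hm d hd)

theorem zero_mem_of_sum_lt_card {m : Multiset ℕ} (h : m.sum < card m) : 0 ∈ m := by
  by_contra h0
  exact (card_le_sum_of_ne_zero fun d hd hd0 => h0 (hd0 ▸ hd)).not_gt h

end Multiset

namespace Paper.PlaneTree

mutual
  theorem map_numChild_pos : ∀ t : PlaneTree, (pos t).map (numChild t) = dfsDeg t
    | node ts => by
      have h := map_numChild_posF ts []
      simp only [List.length_nil, List.nil_append] at h
      simp [pos, dfsDeg, h, numChild, subtreeAt, deg]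
  theorem map_numChild_posF : ∀ (ts pre : List PlaneTree),
      (posF pre.length ts).map (numChild (node (pre ++ ts))) = dfsDegF ts
    | [], _ => by simp [posF, dfsDegF]
    | t :: ts, pre => by
      have hchild : ∀ q, numChild (node (pre ++ t :: ts)) (pre.length :: q) = numChild t q := by
        intro q
        simp [numChild, subtreeAt]
      have hrest := map_numChild_posF ts (pre ++ [t])
      simp only [List.length_append, List.length_singleton, List.append_assoc,
        List.singleton_append] at hrest
      rw [posF, dfsDegF, List.map_append, List.map_map, ← map_numChild_pos t, hrest]
      exact congrArg (· ++ _) (List.map_congr_left fun q _ => hchild q)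
end

theorem ecd_eq_count_dfsDeg (t : PlaneTree) (i : ℕ) : ecd t i = (dfsDeg t).count i := by
  rw [ecd, ← List.countP_eq_length_filter, ← map_numChild_pos, List.count, List.countP_map]
  rfl

mutual
  theorem length_dfsDeg : ∀ t : PlaneTree, (dfsDeg t).length = (dfsDeg t).sum + 1
    | node ts => by
      have := length_dfsDegF ts
      simp only [dfsDeg, List.sum_cons, List.length_cons]
      omega
  theorem length_dfsDegF : ∀ ts : List PlaneTree,
      (dfsDegF ts).length = (dfsDegF ts).sum + ts.length
    | [] => by simp [dfsDegF]
    | t :: ts => by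
      have := length_dfsDeg t
      have := length_dfsDegF ts
      simp only [dfsDegF, List.sum_append, List.length_append, List.length_cons]
      omega
end

theorem dfsDegF_replicate_leaf (n : ℕ) :
    dfsDegF (List.replicate n (node [])) = List.replicate n 0 := by
  induction n with
  | zero => rfl
  | succ n ih => simp [List.replicate_succ, dfsDegF, dfsDeg, ih]

theorem exists_dfsDeg_eq_add_replicate (m : Multiset ℕ) (hm : ∀ d ∈ m, d ≠ 0) :
    ∃ t : PlaneTree, (dfsDeg t : Multiset ℕ) = m + .replicate (m.sum + 1 - m.card) 0 := by
  induction m using Multiset.induction_on with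
  | empty => exact ⟨node [], rfl⟩
  | cons a m ih =>
    obtain ⟨t, ht⟩ := ih fun d hd => hm d (Multiset.mem_cons_of_mem hd)
    have ha : a ≠ 0 := hm a (Multiset.mem_cons_self a m)
    have hcard := Multiset.card_le_sum_of_ne_zero fun d hd => hm d (Multiset.mem_cons_of_mem hd)
    refine ⟨node (t :: List.replicate (a - 1) (node [])), ?_⟩
    have hleaves : m.sum + 1 - m.card + (a - 1) = (a ::ₘ m).sum + 1 - (a ::ₘ m).card := by
      simp only [Multiset.sum_cons, Multiset.card_cons]
      omega
    rw [dfsDeg, dfsDegF, dfsDegF_replicate_leaf, ← Multiset.cons_coe, ← Multiset.coe_add, ht,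
      ← hleaves, Multiset.replicate_add, Multiset.coe_replicate, Multiset.cons_add,
      add_assoc, List.length_cons, List.length_replicate, Nat.sub_add_cancel
      (Nat.one_le_iff_ne_zero.mpr ha)]

theorem exists_dfsDeg_eq_iff (m : Multiset ℕ) :
    (∃ t : PlaneTree, (dfsDeg t : Multiset ℕ) = m) ↔ m.card = m.sum + 1 := by
  constructor
  · rintro ⟨t, rfl⟩
    simpa using length_dfsDeg t
  · intro h
    obtain ⟨t, ht⟩ := exists_dfsDeg_eq_add_replicate (m.filter (· ≠ 0)) (by simp)
    have hsplit := Multiset.filter_add_not (· ≠ 0) m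
    simp only [not_not, Multiset.filter_eq' m 0] at hsplit
    have hcard := congrArg Multiset.card hsplit
    have hsum := congrArg Multiset.sum hsplit
    rw [Multiset.card_add, Multiset.card_replicate] at hcard
    rw [Multiset.sum_add, Multiset.sum_replicate, smul_zero, add_zero] at hsum
    refine ⟨t, ?_⟩
    rw [ht, hsum]
    convert hsplit using 3
    omega

end Paper.PlaneTree

open Paper Paper.PlaneTree in
/-- a finitely supported sequence `s` is the ECD of some finite plane tree
iff `s 0 ≥ 1` and `∑ s_i = 1 + ∑ i·s_i`. -/
theorem tenable_iff (s : ℕ → ℕ) (hsupp : (Function.support s).Finite) :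
    (∃ t : PlaneTree, ∀ i, ecd t i = s i) ↔
      (1 ≤ s 0 ∧ ∑ᶠ i, s i = 1 + ∑ᶠ i, i * s i) := by
  set m := Finsupp.toMultiset (Finsupp.ofSupportFinite s hsupp)
  have hm : ∀ i, m.count i = s i := fun i => by
    simp [m, Finsupp.ofSupportFinite_coe]
  have hecd : ∀ t, (∀ i, ecd t i = s i) ↔ (dfsDeg t : Multiset ℕ) = m := fun t => by
    simp only [ecd_eq_count_dfsDeg, ← hm, Multiset.ext, Multiset.coe_count]
  simp only [hecd, exists_dfsDeg_eq_iff]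
  simp only [← hm, Multiset.finsum_count, Multiset.finsum_mul_count,
    Multiset.one_le_count_iff_mem]
  constructor
  · intro h
    exact ⟨Multiset.zero_mem_of_sum_lt_card (by omega), by omega⟩
  · rintro ⟨-, h⟩
    omega
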